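/- Let m, n and m', n' be positive integers with gcd(m, n) = 1 and gcd(m', n') = 1, and let G_{m,n} and G_{m',n'} be the presented groups ⟨a, b ∣ b·a·b⁻¹ = a⁻¹, aᵐ·b²ⁿ = 1⟩ and ⟨a, b ∣ b·a·b⁻¹ = a⁻¹, a^{m'}·b^{2n'} = 1⟩. If G_{m,n} is isomorphic to G_{m',n'}, then m = m' and n = n'. In other words, the fundamental group of a prism manifold determines and is determined by the ordered pair (m, n). -/

import Mathlib

/-- The relators of the prism manifold group
`G_{m,n} = ⟨a, b ∣ b·a·b⁻¹·a, aᵐ·b²ⁿ⟩`, with `a = of 0` and `b = of 1`. -/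
def prismRels (m n : ℕ) : Set (FreeGroup (Fin 2)) :=
  {FreeGroup.of 1 * FreeGroup.of 0 * (FreeGroup.of 1)⁻¹ * FreeGroup.of 0,
   FreeGroup.of 0 ^ m * FreeGroup.of 1 ^ (2 * n)}

/-!
`G_{m,n}` has order `4mn` and its abelianization has order `4n`; both orders are isomorphism
invariants, so they recover `n` and then `m`.

In a group generated by `A, B` with `B A B⁻¹ = A⁻¹`, the subgroup `⟨A⟩` is normal with cyclic
quotient generated by the image of `B`; this gives the upper bounds `|G| ∣ 2m · 2n` and
`|Gᵃᵇ| ∣ 2 · 2n`. The lower bounds come from surjections onto the dihedral group of order `2m`,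
onto the dicyclic group of order `4m` when `n` is odd, and, for the abelianization, onto `ℤ/4n`
(`m` odd) or `ℤ/2 × ℤ/2n` (`m` even).
Since `m` and `n` are coprime, one of them is odd, and these divisibilities combine to `4mn`.
-/

open Subgroup

section ConjugationByInversion

variable {G : Type*} [Group G] {A B : G}

theorem zpowers_normal_of_conj_eq_inv (hconj : B * A * B⁻¹ = A⁻¹)
    (hgen : closure {A, B} = ⊤) : (zpowers A).Normal := by
  rw [← normalizer_eq_top_iff, eq_top_iff, ← hgen, closure_le]
  rintro g (rfl | rfl)
  · exact le_normalizer (mem_zpowers g)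
  · rw [SetLike.mem_coe, mem_normalizer_iff_map_conj_eq, MonoidHom.map_zpowers]
    simp [hconj]

theorem card_dvd_mul_of_conj_eq_inv {a b : ℕ} (hconj : B * A * B⁻¹ = A⁻¹) (hA : A ^ a = 1)
    (hB : B ^ b ∈ zpowers A) (hgen : closure {A, B} = ⊤) : Nat.card G ∣ a * b := by
  have := zpowers_normal_of_conj_eq_inv hconj hgen
  rw [card_eq_card_quotient_mul_card_subgroup (zpowers A), mul_comm a, Nat.card_zpowers]
  refine mul_dvd_mul ?_ (orderOf_dvd_of_pow_eq_one hA)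
  have hcyclic : zpowers (B : G ⧸ zpowers A) = ⊤ := by
    rw [← MonoidHom.range_eq_top.2 (QuotientGroup.mk'_surjective (zpowers A)),
      MonoidHom.range_eq_map, ← hgen, MonoidHom.map_closure, Set.image_pair,
      QuotientGroup.mk'_apply, (QuotientGroup.eq_one_iff A).2 (mem_zpowers A),
      closure_insert_one, ← zpowers_eq_closure]
    rfl
  rw [← card_top, ← hcyclic, Nat.card_zpowers]
  exact orderOf_dvd_of_pow_eq_one ((QuotientGroup.eq_one_iff _).2 hB)

end ConjugationByInversion

theorem card_dvd_card_abelianization_of_surjective {G H : Type*} [Group G] [CommGroup H]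
    {f : G →* H} (hf : Function.Surjective f) : Nat.card H ∣ Nat.card (Abelianization G) := by
  refine card_dvd_of_surjective (Abelianization.lift f) fun y => ?_
  obtain ⟨x, rfl⟩ := hf y
  exact ⟨Abelianization.of x, Abelianization.lift_apply_of f x⟩

open DihedralGroup in
theorem DihedralGroup.closure_r_one_sr_zero {k : ℕ} :
    Subgroup.closure {r 1, sr 0} = (⊤ : Subgroup (DihedralGroup k)) := by
  refine (eq_top_iff' _).2 fun x => ?_
  have hr : r 1 ∈ Subgroup.closure {r 1, sr (0 : ZMod k)} := subset_closure (by simp)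
  have hs : sr 0 ∈ Subgroup.closure {r 1, sr (0 : ZMod k)} := subset_closure (by simp)
  have hri (i : ZMod k) : r i ∈ Subgroup.closure {r 1, sr (0 : ZMod k)} := by
    simpa [r_one_zpow, ZMod.intCast_zmod_cast] using zpow_mem hr (i.cast : ℤ)
  cases x with
  | r i => exact hri i
  | sr i => simpa [sr_mul_r] using mul_mem hs (hri i)

open QuaternionGroup in
theorem QuaternionGroup.closure_a_one_xa_zero {k : ℕ} [NeZero k] :
    Subgroup.closure {a 1, xa 0} = (⊤ : Subgroup (QuaternionGroup k)) := by
  refine (eq_top_iff' _).2 fun x => ?_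
  have ha : a 1 ∈ Subgroup.closure {a 1, xa (0 : ZMod (2 * k))} := subset_closure (by simp)
  have hx : xa 0 ∈ Subgroup.closure {a 1, xa (0 : ZMod (2 * k))} := subset_closure (by simp)
  have hai (i : ZMod (2 * k)) : a i ∈ Subgroup.closure {a 1, xa (0 : ZMod (2 * k))} := by
    simpa [a_one_pow] using pow_mem ha i.val
  cases x with
  | a i => exact hai i
  | xa i => simpa [xa_mul_a] using mul_mem hx (hai i)

theorem ZMod.closure_ofAdd_one {k : ℕ} :
    Subgroup.closure {Multiplicative.ofAdd (1 : ZMod k)} = ⊤ := by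
  refine (eq_top_iff' _).2 fun x => ?_
  have hx : Multiplicative.ofAdd (1 : ZMod k) ^ (x.toAdd.cast : ℤ) = x := by
    apply Multiplicative.toAdd.injective
    simp
  exact hx ▸ zpow_mem (subset_closure (Set.mem_singleton _)) _

theorem ZMod.closure_ofAdd_prod_basis {k l : ℕ} :
    Subgroup.closure {Multiplicative.ofAdd ((1, 0) : ZMod k × ZMod l),
      Multiplicative.ofAdd (0, 1)} = ⊤ := by
  refine (eq_top_iff' _).2 fun x => ?_
  have hx : Multiplicative.ofAdd ((1, 0) : ZMod k × ZMod l) ^ (x.toAdd.1.cast : ℤ) *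
      Multiplicative.ofAdd (0, 1) ^ (x.toAdd.2.cast : ℤ) = x := by
    apply Multiplicative.toAdd.injective
    ext <;> simp
  exact hx ▸ mul_mem (zpow_mem (subset_closure (by simp)) _)
    (zpow_mem (subset_closure (by simp)) _)

abbrev PrismGroup (m n : ℕ) := PresentedGroup (prismRels m n)

namespace PrismGroup

variable {m n : ℕ}

def a : PrismGroup m n := PresentedGroup.of 0

def b : PrismGroup m n := PresentedGroup.of 1

theorem b_mul_a_mul_b_inv : b * a * b⁻¹ = (a : PrismGroup m n)⁻¹ :=
  mul_eq_one_iff_eq_inv.1 (PresentedGroup.one_of_mem (Set.mem_insert _ _))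

theorem a_pow_mul_b_pow : a ^ m * b ^ (2 * n) = (1 : PrismGroup m n) :=
  PresentedGroup.one_of_mem (Set.mem_insert_of_mem _ rfl)

theorem b_pow_mem_zpowers_a : b ^ (2 * n) ∈ zpowers (a : PrismGroup m n) := by
  rw [eq_inv_of_mul_eq_one_right a_pow_mul_b_pow]
  exact inv_mem (pow_mem (mem_zpowers a) m)

theorem closure_a_b : closure {a, b} = (⊤ : Subgroup (PrismGroup m n)) := by
  rw [← PresentedGroup.closure_range_of]
  congr 1
  ext
  simp [a, b, Fin.exists_fin_two, eq_comm]

theorem a_pow_two_mul : a ^ (2 * m) = (1 : PrismGroup m n) := by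
  have hcomm : Commute (a ^ m) (b : PrismGroup m n) := by
    rw [eq_inv_of_mul_eq_one_left a_pow_mul_b_pow]
    exact ((Commute.refl b).pow_left _).inv_left
  have hinv : (a : PrismGroup m n) ^ m = (a ^ m)⁻¹ := by
    rw [← inv_pow, ← b_mul_a_mul_b_inv, conj_pow, ← hcomm.eq, mul_inv_cancel_right]
  rw [two_mul, pow_add]
  nth_rw 1 [hinv]
  exact inv_mul_cancel _

theorem card_dvd : Nat.card (PrismGroup m n) ∣ 2 * m * (2 * n) :=
  card_dvd_mul_of_conj_eq_inv b_mul_a_mul_b_inv a_pow_two_mul b_pow_mem_zpowers_a closure_a_b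

theorem card_abelianization_dvd : Nat.card (Abelianization (PrismGroup m n)) ∣ 2 * (2 * n) := by
  set f := Abelianization.of (G := PrismGroup m n)
  have hconj : f b * f a * (f b)⁻¹ = (f a)⁻¹ := by
    simp only [← map_inv, ← map_mul, b_mul_a_mul_b_inv]
  refine card_dvd_mul_of_conj_eq_inv hconj ?_ ?_ ?_
  · rw [mul_inv_cancel_comm, eq_inv_iff_mul_eq_one] at hconj
    rw [sq, hconj]
  · rw [← map_pow, ← MonoidHom.map_zpowers]
    exact mem_map_of_mem f b_pow_mem_zpowers_a
  · rw [← Set.image_pair, ← MonoidHom.map_closure, closure_a_b, ← MonoidHom.range_eq_map,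
      MonoidHom.range_eq_top]
    exact QuotientGroup.mk_surjective

section lift

variable {H : Type*} [Group H] {α β : H}

def lift (hconj : β * α * β⁻¹ = α⁻¹) (hpow : α ^ m * β ^ (2 * n) = 1) : PrismGroup m n →* H :=
  PresentedGroup.toGroup (f := ![α, β]) <| by
    rintro r (rfl | rfl)
    · simp [hconj]
    · simpa using hpow

theorem lift_surjective (hconj : β * α * β⁻¹ = α⁻¹) (hpow : α ^ m * β ^ (2 * n) = 1)
    (hgen : closure {α, β} = ⊤) : Function.Surjective (lift hconj hpow) := by
  rw [← MonoidHom.range_eq_top, eq_top_iff, ← hgen, closure_le]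
  rintro _ (rfl | rfl)
  · exact ⟨a, PresentedGroup.toGroup.of _⟩
  · exact ⟨b, PresentedGroup.toGroup.of _⟩

theorem card_dvd_card_of_closure_eq_top (hconj : β * α * β⁻¹ = α⁻¹)
    (hpow : α ^ m * β ^ (2 * n) = 1) (hgen : closure {α, β} = ⊤) :
    Nat.card H ∣ Nat.card (PrismGroup m n) :=
  card_dvd_of_surjective _ (lift_surjective hconj hpow hgen)

end lift

theorem card_dvd_card_abelianization_of_closure_eq_top {H : Type*} [CommGroup H] {α β : H}
    (hconj : β * α * β⁻¹ = α⁻¹) (hpow : α ^ m * β ^ (2 * n) = 1) (hgen : closure {α, β} = ⊤) :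
    Nat.card H ∣ Nat.card (Abelianization (PrismGroup m n)) :=
  card_dvd_card_abelianization_of_surjective (lift_surjective hconj hpow hgen)

theorem two_mul_dvd_card : 2 * m ∣ Nat.card (PrismGroup m n) := by
  rw [← DihedralGroup.nat_card]
  refine card_dvd_card_of_closure_eq_top (α := DihedralGroup.r 1) (β := .sr 0) ?_ ?_
    DihedralGroup.closure_r_one_sr_zero
  · simp [DihedralGroup.sr_mul_r, DihedralGroup.sr_mul_sr, DihedralGroup.inv_r]
  · simp [pow_mul, sq]

theorem four_mul_dvd_card (hm : 0 < m) (hn : Odd n) : 4 * m ∣ Nat.card (PrismGroup m n) := by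
  have : NeZero m := ⟨hm.ne'⟩
  rw [← QuaternionGroup.card, ← Nat.card_eq_fintype_card]
  refine card_dvd_card_of_closure_eq_top (α := QuaternionGroup.a 1) (β := .xa 0) ?_ ?_
    QuaternionGroup.closure_a_one_xa_zero
  · rw [mul_inv_eq_iff_eq_mul]
    show QuaternionGroup.xa 0 * .a 1 = .a (-1) * .xa 0
    simp
  · obtain ⟨k, rfl⟩ := hn
    rw [pow_mul, QuaternionGroup.xa_sq, ← QuaternionGroup.a_one_pow, ← pow_mul, ← pow_add,
      show m + m * (2 * k + 1) = 2 * m * (k + 1) by ring, pow_mul, QuaternionGroup.a_one_pow_n,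
      one_pow]

theorem four_mul_dvd_card_abelianization_of_odd (hm : Odd m) :
    4 * n ∣ Nat.card (Abelianization (PrismGroup m n)) := by
  have h4n : ((4 * n : ℕ) : ZMod (4 * n)) = 0 := ZMod.natCast_self _
  push_cast at h4n
  set α := Multiplicative.ofAdd ((2 * n : ℕ) : ZMod (4 * n))
  set β := Multiplicative.ofAdd (1 : ZMod (4 * n))
  have hconj : β * α * β⁻¹ = α⁻¹ := by
    apply Multiplicative.toAdd.injective
    simp only [α, β, toAdd_mul, toAdd_inv, toAdd_ofAdd]
    push_cast
    linear_combination h4n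
  have hpow : α ^ m * β ^ (2 * n) = 1 := by
    obtain ⟨k, rfl⟩ := hm
    apply Multiplicative.toAdd.injective
    simp only [α, β, toAdd_mul, toAdd_pow, toAdd_ofAdd, toAdd_one, nsmul_eq_mul]
    push_cast
    linear_combination (k + 1) * h4n
  have := card_dvd_card_abelianization_of_closure_eq_top hconj hpow
    (eq_top_mono (closure_mono (Set.subset_insert _ _)) ZMod.closure_ofAdd_one)
  rwa [Nat.card_congr Multiplicative.toAdd, Nat.card_zmod] at this

theorem four_mul_dvd_card_abelianization_of_even (hm : Even m) :
    4 * n ∣ Nat.card (Abelianization (PrismGroup m n)) := by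
  set α := Multiplicative.ofAdd ((1, 0) : ZMod 2 × ZMod (2 * n))
  set β := Multiplicative.ofAdd ((0, 1) : ZMod 2 × ZMod (2 * n))
  have hconj : β * α * β⁻¹ = α⁻¹ := by
    apply Multiplicative.toAdd.injective
    ext <;> simp [α, β]
  have hpow : α ^ m * β ^ (2 * n) = 1 := by
    obtain ⟨k, rfl⟩ := hm
    apply Multiplicative.toAdd.injective
    ext <;> simp [α, β, CharTwo.add_self_eq_zero]
  have := card_dvd_card_abelianization_of_closure_eq_top hconj hpow ZMod.closure_ofAdd_prod_basis
  rwa [Nat.card_congr Multiplicative.toAdd, Nat.card_prod, Nat.card_zmod, Nat.card_zmod,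
    ← mul_assoc] at this

theorem card_abelianization : Nat.card (Abelianization (PrismGroup m n)) = 4 * n := by
  refine Nat.dvd_antisymm (card_abelianization_dvd.trans (dvd_of_eq (by ring))) ?_
  rcases Nat.even_or_odd m with hm | hm
  exacts [four_mul_dvd_card_abelianization_of_even hm, four_mul_dvd_card_abelianization_of_odd hm]

theorem card (hm : 0 < m) (hmn : m.Coprime n) : Nat.card (PrismGroup m n) = 4 * (m * n) := by
  refine Nat.dvd_antisymm (card_dvd.trans (dvd_of_eq (by ring))) ?_
  have h4n : 4 * n ∣ Nat.card (PrismGroup m n) := card_abelianization (m := m) ▸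
    card_dvd_of_surjective Abelianization.of QuotientGroup.mk_surjective
  rcases Nat.even_or_odd m with hm_even | hm_odd
  · have hn : Odd n := Nat.coprime_two_left.1 (hmn.coprime_dvd_left hm_even.two_dvd)
    have hcop : (4 * m).Coprime n :=
      Nat.Coprime.mul_left (by simpa using (Nat.coprime_two_left.2 hn).pow_left 2) hmn
    simpa [mul_assoc] using hcop.mul_dvd_of_dvd_of_dvd (four_mul_dvd_card hm hn)
      ((dvd_mul_left n 4).trans h4n)
  · have hcop : m.Coprime (4 * n) :=
      Nat.Coprime.mul_right (by simpa using (Nat.coprime_two_right.2 hm_odd).pow_right 2) hmn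
    simpa [mul_left_comm] using hcop.mul_dvd_of_dvd_of_dvd
      ((dvd_mul_left m 2).trans two_mul_dvd_card) h4n

end PrismGroup

theorem prismGroup_determines_pair_general (m n m' n' : ℕ)
    (hm : 0 < m) (hn : 0 < n) (hmn : Nat.Coprime m n)
    (hm' : 0 < m') (hmn' : Nat.Coprime m' n')
    (h : Nonempty (PresentedGroup (prismRels m n) ≃* PresentedGroup (prismRels m' n'))) :
    m = m' ∧ n = n' := by
  obtain ⟨e⟩ := h
  have hn_eq : n = n' := by
    have := Nat.card_congr e.abelianizationCongr.toEquiv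
    rw [PrismGroup.card_abelianization, PrismGroup.card_abelianization] at this
    omega
  subst hn_eq
  have := Nat.card_congr e.toEquiv
  rw [PrismGroup.card hm hmn, PrismGroup.card hm' hmn'] at this
  exact ⟨Nat.eq_of_mul_eq_mul_right hn (by omega), rfl⟩

/-- the prism manifold group `G_{m,n}` determines and is determined by
the ordered pair `(m, n)`: if `G_{m,n} ≅ G_{m',n'}` then `m = m'` and `n = n'`. -/
theorem prismGroup_determines_pair (m n m' n' : ℕ)
    (hm : 0 < m) (hn : 0 < n) (hmn : Nat.Coprime m n)
    (hm' : 0 < m') (hn' : 0 < n') (hmn' : Nat.Coprime m' n')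
    (h : Nonempty (PresentedGroup (prismRels m n) ≃* PresentedGroup (prismRels m' n'))) :
    m = m' ∧ n = n' :=
  prismGroup_determines_pair_general m n m' n' hm hn hmn hm' hmn' h
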